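/- Every unit of the ring of integers of Q(√318049), where 318049 = 47 · 67 · 101, is of the form ±(13535 + 24√318049)ⁿ for some integer n; that is, ε = 13535 + 24√318049 is a fundamental unit of Q(√318049). -/

import Mathlib

/-!
Let `d = 318049 = 47 · 67 · 101` and `w = √d`. The conjugation `w ↦ -w` shows that trace and norm
of an algebraic integer `p + q w` of `ℚ(w)` are integers; as `d` is squarefree, this forces
`2p = s` and `2q = t` to be integers with `s² - d t² = 4 N`, `N` the norm. For a unit `N = ±1`,
and since `d ≡ 1 mod 8`, odd `s, t` would give `s² - d t² ≡ 0 mod 8`: so `s, t` are even and every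
unit lies in `ℤ[w]`. Norm `-1` is excluded because `47 ≡ 3 mod 4` divides `d`. Hence the units
are the images of the solutions of Pell's equation `x² - d y² = 1`, which are `±(13535 + 24 w)ⁿ`
because `1 + d y²` is not a square for `0 < y < 24`.
-/

open IntermediateField NumberField Polynomial

theorem Rat.exists_intCast_eq_of_squarefree_mul_sq {d m : ℤ} (hd : Squarefree d) {r : ℚ}
    (h : d * r ^ 2 = m) : ∃ t : ℤ, (t : ℚ) = r := by
  refine ⟨r.num, ?_⟩
  suffices r.den = 1 by rw [← Rat.num_div_den r, this]; simp
  have hz : d * r.num ^ 2 = m * (r.den : ℤ) ^ 2 := by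
    have : (d * r.num ^ 2 : ℚ) = m * (r.den : ℤ) ^ 2 := by
      rw [← Rat.mul_den_eq_num, ← h]; push_cast; ring
    exact_mod_cast this
  have hcop : IsCoprime ((r.den : ℤ) ^ 2) (r.num ^ 2) := by
    refine IsCoprime.pow (Int.isCoprime_iff_gcd_eq_one.mpr ?_)
    rw [Int.gcd_comm]; exact r.reduced
  have hdvd : (r.den : ℤ) ^ 2 ∣ d := hcop.dvd_of_dvd_mul_right ⟨m, by rw [hz]; ring⟩
  have hunit := hd _ (by rwa [← sq])
  exact_mod_cast Int.isUnit_iff_natAbs_eq.mp hunit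

theorem exists_intCast_eq_of_isIntegral_ratCast {K : Type*} [Field K] [CharZero K] {r : ℚ}
    (h : IsIntegral ℤ (r : K)) : ∃ n : ℤ, (n : ℚ) = r := by
  rw [← eq_ratCast (algebraMap ℚ K), isIntegral_algebraMap_iff (algebraMap ℚ K).injective,
    IsIntegrallyClosed.isIntegral_iff] at h
  obtain ⟨n, hn⟩ := h
  exact ⟨n, by simpa using hn⟩

theorem two_dvd_of_sq_sub_mul_sq_eq_four_mul {d s t N : ℤ} (hd : d ≡ 1 [ZMOD 8]) (hN : Odd N)
    (h : s ^ 2 - d * t ^ 2 = 4 * N) : 2 ∣ s ∧ 2 ∣ t := by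
  obtain ⟨k, rfl⟩ := hN
  have h8 := congrArg (Int.cast : ℤ → ZMod 8) h
  have hd8 : (d : ZMod 8) = 1 := by simpa using (ZMod.intCast_eq_intCast_iff _ _ 8).mpr hd
  push_cast [hd8, one_mul] at h8
  have key : ∀ a b c : ZMod 8, a ^ 2 - b ^ 2 = 4 * (2 * c + 1) →
      ZMod.castHom (by norm_num : 2 ∣ 8) (ZMod 2) a = 0 ∧
        ZMod.castHom (by norm_num : 2 ∣ 8) (ZMod 2) b = 0 := by decide
  obtain ⟨hs, ht⟩ := key _ _ _ h8
  rw [map_intCast, ZMod.intCast_zmod_eq_zero_iff_dvd] at hs ht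
  exact ⟨hs, ht⟩

theorem sq_sub_mul_sq_ne_neg_one {d : ℤ} {p : ℕ} (hp : p.Prime) (hp4 : p % 4 = 3)
    (hpd : (p : ℤ) ∣ d) (x y : ℤ) : x ^ 2 - d * y ^ 2 ≠ -1 := by
  have := Fact.mk hp
  intro h
  have hd : (d : ZMod p) = 0 := (ZMod.intCast_zmod_eq_zero_iff_dvd d p).mpr hpd
  have hx : (x : ZMod p) ^ 2 = -1 := by simpa [hd] using congrArg (Int.cast : ℤ → ZMod p) h
  exact ZMod.exists_sq_eq_neg_one_iff.mp ⟨x, by rw [← hx, sq]⟩ hp4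

section QuadraticSubfield

variable {L : Type*} [Field L] [CharZero L] {d : ℤ} {z : L}

theorem isIntegral_of_sq_eq_intCast (hz : z ^ 2 = d) : IsIntegral ℚ z :=
  ⟨X ^ 2 - C (d : ℚ), monic_X_pow_sub_C _ two_ne_zero, by rw [← aeval_def]; simp [hz]⟩

theorem minpoly_eq_X_sq_sub_C (hz : z ^ 2 = d) (hd : ¬IsSquare (d : ℚ)) :
    minpoly ℚ z = X ^ 2 - C (d : ℚ) := by
  refine (minpoly.eq_of_irreducible_of_monic ?_ (by simp [hz])
    (monic_X_pow_sub_C _ two_ne_zero)).symm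
  exact X_pow_sub_C_irreducible_of_prime Nat.prime_two fun b hb => hd ⟨b, by rw [← hb, sq]⟩

theorem IntermediateField.AdjoinSimple.gen_sq (hz : z ^ 2 = d) :
    AdjoinSimple.gen ℚ z ^ 2 = d :=
  (algebraMap ℚ⟮z⟯ L).injective (by simp [hz])

variable (hz : z ^ 2 = d) (hd : ¬IsSquare (d : ℚ))
include hz hd

theorem exists_eq_add_mul_gen (α : ℚ⟮z⟯) : ∃ p q : ℚ, α = p + q * AdjoinSimple.gen ℚ z := by
  obtain ⟨f, hdeg, rfl⟩ := (adjoin.powerBasis (isIntegral_of_sq_eq_intCast hz)).exists_eq_aeval α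
  rw [adjoin.powerBasis_dim, minpoly_eq_X_sq_sub_C hz hd, natDegree_X_pow_sub_C] at hdeg
  refine ⟨f.coeff 0, f.coeff 1, ?_⟩
  rw [eq_X_add_C_of_natDegree_le_one (Nat.le_of_lt_succ hdeg), adjoin.powerBasis_gen]
  simp [add_comm]

noncomputable def conjGen : ℚ⟮z⟯ →ₐ[ℚ] ℚ⟮z⟯ :=
  (adjoin.powerBasis (isIntegral_of_sq_eq_intCast hz)).lift (-AdjoinSimple.gen ℚ z) (by
    rw [adjoin.powerBasis_gen, minpoly_gen, minpoly_eq_X_sq_sub_C hz hd]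
    simp [AdjoinSimple.gen_sq hz])

theorem conjGen_gen : conjGen hz hd (AdjoinSimple.gen ℚ z) = -AdjoinSimple.gen ℚ z :=
  (adjoin.powerBasis (isIntegral_of_sq_eq_intCast hz)).lift_gen _ _

theorem conjGen_add_mul_gen (p q : ℚ) :
    conjGen hz hd (p + q * AdjoinSimple.gen ℚ z) = p - q * AdjoinSimple.gen ℚ z := by
  rw [map_add, map_mul, map_ratCast, map_ratCast, conjGen_gen, mul_neg, sub_eq_add_neg]

theorem exists_int_two_mul_eq_add_mul_gen (hsf : Squarefree d) (x : 𝓞 ℚ⟮z⟯) :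
    ∃ s t N : ℤ, 2 * (x : ℚ⟮z⟯) = s + t * AdjoinSimple.gen ℚ z ∧ s ^ 2 - d * t ^ 2 = 4 * N ∧
      (N : ℚ⟮z⟯) = x * conjGen hz hd x := by
  obtain ⟨p, q, hx⟩ := exists_eq_add_mul_gen hz hd (x : ℚ⟮z⟯)
  have hint : IsIntegral ℤ (x : ℚ⟮z⟯) := x.isIntegral_coe
  have hint' : IsIntegral ℤ (conjGen hz hd x) := hint.map ((conjGen hz hd).restrictScalars ℤ)
  have htrace : ((2 * p : ℚ) : ℚ⟮z⟯) = x + conjGen hz hd x := by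
    rw [hx, conjGen_add_mul_gen]; push_cast; ring
  have hnorm : ((p ^ 2 - d * q ^ 2 : ℚ) : ℚ⟮z⟯) = x * conjGen hz hd x := by
    rw [hx, conjGen_add_mul_gen]; push_cast
    linear_combination (q : ℚ⟮z⟯) ^ 2 * AdjoinSimple.gen_sq hz
  obtain ⟨s, hs⟩ := exists_intCast_eq_of_isIntegral_ratCast (htrace ▸ hint.add hint')
  obtain ⟨N, hN⟩ := exists_intCast_eq_of_isIntegral_ratCast (hnorm ▸ hint.mul hint')
  obtain ⟨t, ht⟩ := Rat.exists_intCast_eq_of_squarefree_mul_sq hsf (m := s ^ 2 - 4 * N)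
    (r := 2 * q) (by push_cast [hs, hN]; ring)
  refine ⟨s, t, N, ?_, ?_, ?_⟩
  · rw [hx, ← Rat.cast_intCast s, hs, ← Rat.cast_intCast t, ht]; push_cast; ring
  · have : ((s ^ 2 - d * t ^ 2 : ℤ) : ℚ) = (4 * N : ℤ) := by push_cast [hs, ht, hN]; ring
    exact_mod_cast this
  · rw [← hnorm, ← hN, Rat.cast_intCast]

theorem exists_sq_sub_mul_sq_eq_one_of_unit (hsf : Squarefree d) (h8 : d ≡ 1 [ZMOD 8])
    (hneg : ∀ x y : ℤ, x ^ 2 - d * y ^ 2 ≠ -1) (u : (𝓞 ℚ⟮z⟯)ˣ) :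
    ∃ x y : ℤ, x ^ 2 - d * y ^ 2 = 1 ∧
      ((u : 𝓞 ℚ⟮z⟯) : ℚ⟮z⟯) = x + y * AdjoinSimple.gen ℚ z := by
  obtain ⟨s, t, N, hu, hst, hN⟩ := exists_int_two_mul_eq_add_mul_gen hz hd hsf u
  obtain ⟨-, -, M, -, -, hM⟩ := exists_int_two_mul_eq_add_mul_gen hz hd hsf ↑u⁻¹
  have hNM : ((N * M : ℤ) : ℚ⟮z⟯) = 1 := by
    have hinv : ((u : 𝓞 ℚ⟮z⟯) : ℚ⟮z⟯) * ((u⁻¹ : (𝓞 ℚ⟮z⟯)ˣ) : 𝓞 ℚ⟮z⟯) = 1 := by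
      simp only [RingOfIntegers.coe_eq_algebraMap, ← map_mul, Units.mul_inv, map_one]
    rw [Int.cast_mul, hN, hM, mul_mul_mul_comm, ← map_mul (conjGen hz hd), hinv, map_one,
      one_mul]
  have hN1 : N = 1 ∨ N = -1 := Int.isUnit_iff.mp (IsUnit.of_mul_eq_one M (by exact_mod_cast hNM))
  have hNodd : Odd N := by rcases hN1 with rfl | rfl <;> decide
  obtain ⟨⟨x, rfl⟩, ⟨y, rfl⟩⟩ := two_dvd_of_sq_sub_mul_sq_eq_four_mul h8 hNodd hst
  have hxy : x ^ 2 - d * y ^ 2 = N := by linarith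
  refine ⟨x, y, hxy.trans (hN1.resolve_right fun h => hneg x y (hxy.trans h)), ?_⟩
  push_cast at hu
  linear_combination hu / 2

end QuadraticSubfield

namespace Pell

namespace Solution₁

variable {R : Type*} [CommRing R] {d : ℤ}

noncomputable def unitsMap (r : { r : R // r * r = d }) : Solution₁ d →* Rˣ :=
  (Units.map (Zsqrtd.lift r : ℤ√d →+* R).toMonoidHom).comp Unitary.toUnits

theorem coe_unitsMap (r : { r : R // r * r = d }) (a : Solution₁ d) :
    (unitsMap r a : R) = a.x + a.y * r :=
  rfl

theorem unitsMap_neg (r : { r : R // r * r = d }) (a : Solution₁ d) :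
    unitsMap r (-a) = -unitsMap r a := by
  ext
  rw [Units.val_neg, coe_unitsMap, coe_unitsMap, x_neg, y_neg]
  push_cast
  ring

end Solution₁

theorem isFundamental_of_not_isSquare {d : ℤ} (a : Solution₁ d) (hx : 1 < a.x) (hy : 0 < a.y)
    (h : ∀ y : ℤ, 0 < y → y < a.y → ¬IsSquare (1 + d * y ^ 2)) : IsFundamental a := by
  refine ⟨hx, hy, fun {b} hb => le_of_not_gt fun hlt => ?_⟩
  have hd : 0 < d := Solution₁.d_pos_of_one_lt_x hx
  have hby : 0 < |b.y| := abs_pos.mpr (Solution₁.y_ne_zero_of_one_lt_x hb)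
  have hlt' : |b.y| < a.y := by
    have : d * |b.y| ^ 2 < d * a.y ^ 2 := by
      rw [sq_abs, Solution₁.prop_y, Solution₁.prop_y]; nlinarith
    exact lt_of_pow_lt_pow_left₀ 2 hy.le (lt_of_mul_lt_mul_left this hd.le)
  exact h _ hby hlt' ⟨b.x, by rw [sq_abs, ← Solution₁.prop_x, sq]⟩

theorem isFundamental_13535_24 :
    IsFundamental (Solution₁.mk (d := 318049) 13535 24 (by norm_num)) := by
  refine isFundamental_of_not_isSquare _ (by simp [Solution₁.x_mk]) (by simp [Solution₁.y_mk]) ?_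
  rw [Solution₁.y_mk]
  intro y hy0 hy
  interval_cases y <;> norm_num

end Pell

/-- Every unit of the ring of integers of `ℚ(√318049)`, where `318049 = 47 · 67 · 101`, is of
the form `±(13535 + 24√318049)ⁿ` for some integer `n`; that is, `ε = 13535 + 24√318049` is a
fundamental unit of `ℚ(√318049)`. -/
theorem fundamentalUnit_sqrt318049 (z : ℝ) (hz : z ^ 2 = 318049) :
    ∀ u : (𝓞 ℚ⟮z⟯)ˣ, ∃ n : ℤ,
      ((u : 𝓞 ℚ⟮z⟯) : ℚ⟮z⟯) = (13535 + 24 * AdjoinSimple.gen ℚ z) ^ n ∨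
      ((u : 𝓞 ℚ⟮z⟯) : ℚ⟮z⟯) = -(13535 + 24 * AdjoinSimple.gen ℚ z) ^ n := by
  have hz' : z ^ 2 = ((318049 : ℤ) : ℝ) := by rw [hz]; norm_num
  have hd : ¬IsSquare ((318049 : ℤ) : ℚ) := by norm_num
  have hsf : Squarefree (318049 : ℤ) := by
    rw [← Nat.cast_ofNat, Int.squarefree_natCast,
      Nat.squarefree_iff_nodup_primeFactorsList (by norm_num)]
    simp [Nat.primeFactorsList_ofNat]
  intro u
  obtain ⟨x, y, hxy, hu⟩ := exists_sq_sub_mul_sq_eq_one_of_unit hz' hd hsf (by decide)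
    (sq_sub_mul_sq_ne_neg_one (p := 47) (by norm_num) (by norm_num) (by norm_num)) u
  let φ := Pell.Solution₁.unitsMap ⟨AdjoinSimple.gen ℚ z, by rw [← sq, AdjoinSimple.gen_sq hz']⟩
  have hε : (φ (.mk 13535 24 (by norm_num)) : ℚ⟮z⟯) = 13535 + 24 * AdjoinSimple.gen ℚ z := by
    simp [φ, Pell.Solution₁.coe_unitsMap]
  have hu' : ((u : 𝓞 ℚ⟮z⟯) : ℚ⟮z⟯) = φ (.mk x y hxy) := by
    rw [hu, Pell.Solution₁.coe_unitsMap, Pell.Solution₁.x_mk, Pell.Solution₁.y_mk]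
  rw [hu']
  obtain ⟨n, hn | hn⟩ := Pell.isFundamental_13535_24.eq_zpow_or_neg_zpow (.mk x y hxy)
  · exact ⟨n, .inl (by rw [hn, map_zpow, Units.val_zpow_eq_zpow_val, hε])⟩
  · refine ⟨n, .inr ?_⟩
    rw [hn, Pell.Solution₁.unitsMap_neg, map_zpow, Units.val_neg, Units.val_zpow_eq_zpow_val, hε]
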